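/- arXiv:1204.3670 — 4 statements merged into one kernel-verified Lean document; each statement's English description precedes it below -/
import Mathlib

section
/- For probabilities p1, p2, p3 ∈ (0,1) with q_i = 1 - p_i, the condition ((1 - p1*q2)*(1 - p3) - sqrt((1 - p1*q2)^2*(1 - p3)^2 - 4*p2*q1*q2*q3*(1 - p3))) / (2*p2*q3) = 1 holds if and only if (1 + q1)*q2 ≥ 1. -/
/-! With `a = q1 q2` one has `1 - p1 q2 = p2 + a`, so the discriminant is
`(p2 - a)² (1 - p3)²` and `S(1) = (p2 + a - |p2 - a|) / (2 p2) = min a p2 / p2`.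
Hence `S(1) = 1` exactly when `p2 ≤ q1 q2`, i.e. `(1 + q1) q2 ≥ 1`. -/

lemma add_sub_abs_sub_eq_two_mul_min (x y : ℝ) : x + y - |y - x| = 2 * min x y := by
  rw [← two_nsmul_inf_eq_add_sub_abs_sub, two_nsmul, two_mul]

/-- The smaller root of `c (z - 1) (y z - x)` by the quadratic formula. -/
lemma smaller_root_eq_min_div {x y c : ℝ} (hc : 0 < c) :
    ((x + y) * c - √(((x + y) * c) ^ 2 - 4 * x * y * c ^ 2)) / (2 * y * c) = min x y / y := by
  have hdisc : ((x + y) * c) ^ 2 - 4 * x * y * c ^ 2 = ((y - x) * c) ^ 2 := by ring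
  rw [hdisc, Real.sqrt_sq_eq_abs, abs_mul, abs_of_pos hc, ← sub_mul,
    add_sub_abs_sub_eq_two_mul_min, mul_assoc, mul_assoc, mul_div_mul_left _ _ two_ne_zero,
    mul_div_mul_right _ _ hc.ne']

lemma min_div_eq_one_iff {α : Type*} [DivisionRing α] [LinearOrder α] {x y : α} (hy : y ≠ 0) :
    min x y / y = 1 ↔ y ≤ x := by
  rw [div_eq_one_iff_eq hy, min_eq_right_iff]

theorem knudsen_hein_S_one_iff_general
    (p1 p2 p3 q1 q2 q3 : ℝ)
    (hp2 : p2 ∈ Set.Ioo (0:ℝ) 1) (hp3 : p3 ∈ Set.Ioo (0:ℝ) 1)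
    (hq1 : q1 = 1 - p1) (hq2 : q2 = 1 - p2) (hq3 : q3 = 1 - p3) :
    ((1 - p1*q2) * (1 - p3)
        - Real.sqrt ((1 - p1*q2)^2 * (1 - p3)^2 - 4*p2*q1*q2*q3*(1 - p3)))
      / (2*p2*q3) = 1
    ↔ (1 + q1) * q2 ≥ 1 := by
  have hq3_pos : 0 < q3 := by linarith [hp3.2]
  have hlin : 1 - p1 * q2 = q1 * q2 + p2 := by rw [hq1, hq2]; ring
  have hconst : 4 * p2 * q1 * q2 * q3 * (1 - p3) = 4 * (q1 * q2) * p2 * q3 ^ 2 := by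
    rw [← hq3]; ring
  rw [hlin, hconst, ← hq3, ← mul_pow, smaller_root_eq_min_div hq3_pos, min_div_eq_one_iff hp2.1.ne']
  constructor <;> intro h <;> linarith

/-- For probabilities `p1, p2, p3 ∈ (0,1)` with `qᵢ = 1 - pᵢ`, the
Knudsen–Hein consistency condition `S(1) = 1` holds iff `(1 + q1) * q2 ≥ 1`. -/
theorem knudsen_hein_S_one_iff
    (p1 p2 p3 q1 q2 q3 : ℝ)
    (hp1 : p1 ∈ Set.Ioo (0:ℝ) 1) (hp2 : p2 ∈ Set.Ioo (0:ℝ) 1) (hp3 : p3 ∈ Set.Ioo (0:ℝ) 1)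
    (hq1 : q1 = 1 - p1) (hq2 : q2 = 1 - p2) (hq3 : q3 = 1 - p3) :
    ((1 - p1*q2) * (1 - p3)
        - Real.sqrt ((1 - p1*q2)^2 * (1 - p3)^2 - 4*p2*q1*q2*q3*(1 - p3)))
      / (2*p2*q3) = 1
    ↔ (1 + q1) * q2 ≥ 1 :=
  knudsen_hein_S_one_iff_general p1 p2 p3 q1 q2 q3 hp2 hp3 hq1 hq2 hq3
end

section
/- Let R(z) = (1 - p1*q2*z)^2 * (1 - p3*z^2) - 4*p2*q1*q2*q3*z^3 with p1, p2, p3 ∈ (0,1), q_i = 1 - p_i. Then R(1/(p1*q2)) < 0, and hence R has a positive real root strictly less than 1/(p1*q2). -/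
/-! At `z₀ = 1/(p1*q2)` the squared factor vanishes, so `R z₀ = -4 p2 q1 q2 q3 z₀³ < 0`,
while `R 0 = 1 > 0`; the intermediate value theorem gives a root in `(0, z₀)`. -/

/-- `R(1/(p1*q2)) < 0`, hence `R` has a positive real root
strictly less than `1/(p1*q2)`. -/
theorem R_root_lt_inv_p1q2
    (p1 p2 p3 q1 q2 q3 : ℝ)
    (hp1 : p1 ∈ Set.Ioo (0:ℝ) 1) (hp2 : p2 ∈ Set.Ioo (0:ℝ) 1) (hp3 : p3 ∈ Set.Ioo (0:ℝ) 1)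
    (hq1 : q1 = 1 - p1) (hq2 : q2 = 1 - p2) (hq3 : q3 = 1 - p3)
    (R : ℝ → ℝ)
    (hR : ∀ z, R z = (1 - p1*q2*z)^2 * (1 - p3*z^2) - 4*p2*q1*q2*q3*z^3) :
    R (1/(p1*q2)) < 0 ∧ ∃ z : ℝ, 0 < z ∧ z < 1/(p1*q2) ∧ R z = 0 := by
  obtain ⟨hp1, hp1'⟩ := hp1
  obtain ⟨hp2, hp2'⟩ := hp2
  have hq1_pos : 0 < q1 := by linarith
  have hq2_pos : 0 < q2 := by linarith
  have hq3_pos : 0 < q3 := by linarith [hp3.2]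
  set z₀ := 1 / (p1 * q2)
  have hz₀ : 0 < z₀ := by positivity
  have hlinear : 1 - p1 * q2 * z₀ = 0 := by
    rw [mul_one_div_cancel (mul_pos hp1 hq2_pos).ne', sub_self]
  have hneg : R z₀ < 0 := by
    rw [hR, hlinear]
    linarith [show 0 < 4 * p2 * q1 * q2 * q3 * z₀ ^ 3 by positivity]
  have hcont : Continuous R := by
    rw [show R = _ from funext hR]
    fun_prop
  obtain ⟨z, hz, hRz⟩ :=
    intermediate_value_Ioo' hz₀.le hcont.continuousOn ⟨hneg, by simp [hR]⟩
  exact ⟨hneg, z, hz.1, hz.2, hRz⟩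
end

section
/- Let p1, p2, p3 ∈ (0,1), q_i = 1 - p_i, and let ρ0 ∈ (0, min(1/(p1*q2), 1/sqrt(p3))) be a real root of R(z) = (1 - p1*q2*z)^2*(1 - p3*z^2) - 4*p2*q1*q2*q3*z^3. Then ρ0 is the unique complex root of R on the circle {z : |z| = ρ0}. -/
/-!
Write `R(z) = (1 - a z)² (1 - b z²) - k z³`. Taking norms in `R(w) = 0` with `|w| = ρ0` gives
`|1 - a w|² |1 - b w²| = |k ρ0³| = (1 - a ρ0)² (1 - b ρ0²)`, while the reverse
triangle inequality bounds each factor on the left from below by the corresponding factor on the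
right. Hence `|1 - a w| = 1 - a |w|`, which in the strictly convex plane forces `a w` onto the
nonnegative real axis, i.e. `w = ρ0`.
-/

namespace Complex

theorem eq_norm_of_norm_one_sub_eq {z : ℂ} (h : ‖1 - z‖ = 1 - ‖z‖) : z = ‖z‖ := by
  have hray : SameRay ℝ 1 z :=
    sameRay_iff_norm_sub.2 (by rw [h, norm_one, abs_of_nonneg (h ▸ norm_nonneg _)])
  obtain ⟨r, hr, rfl⟩ := hray.exists_nonneg_left one_ne_zero
  simp [abs_of_nonneg hr]

theorem eq_norm_of_norm_one_sub_mul_eq {a : ℝ} (ha : 0 < a) {w : ℂ}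
    (h : ‖1 - a * w‖ = 1 - a * ‖w‖) : w = ‖w‖ := by
  have haw := eq_norm_of_norm_one_sub_eq (z := a * w) <| by
    rwa [norm_mul, Complex.norm_of_nonneg ha.le]
  rw [norm_mul, Complex.norm_of_nonneg ha.le, ofReal_mul] at haw
  exact mul_left_cancel₀ (ofReal_ne_zero.2 ha.ne') haw

theorem one_sub_mul_norm_le {c : ℝ} (hc : 0 ≤ c) (z : ℂ) : 1 - c * ‖z‖ ≤ ‖1 - c * z‖ := by
  simpa [norm_mul, abs_of_nonneg hc] using norm_sub_norm_le (1 : ℂ) (c * z)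

end Complex

theorem eq_of_sq_mul_eq_of_le {x y X Y : ℝ} (hx : 0 ≤ x) (hy : 0 < y) (hxX : x ≤ X) (hyY : y ≤ Y)
    (h : X ^ 2 * Y = x ^ 2 * y) : X = x := by
  have hsq : X ^ 2 ≤ x ^ 2 :=
    le_of_mul_le_mul_right (h ▸ mul_le_mul_of_nonneg_left hyY (sq_nonneg X)) hy
  exact le_antisymm ((pow_le_pow_iff_left₀ (hx.trans hxX) hx two_ne_zero).1 hsq) hxX

theorem mul_sq_lt_one_of_lt_one_div_sqrt {p ρ : ℝ} (hp : 0 < p) (hρ : 0 ≤ ρ) (h : ρ < 1 / √p) :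
    p * ρ ^ 2 < 1 := by
  have hsqrt : √p * ρ < 1 := (lt_div_iff₀' (Real.sqrt_pos.2 hp)).1 h
  calc p * ρ ^ 2 = (√p * ρ) ^ 2 := by rw [mul_pow, Real.sq_sqrt hp.le]
    _ < 1 := pow_lt_one₀ (by positivity) hsqrt two_ne_zero

theorem eq_ofReal_of_norm_eq_of_root {a b k ρ : ℝ} (ha : 0 < a) (hb : 0 ≤ b) (haρ : a * ρ < 1)
    (hbρ : b * ρ ^ 2 < 1) (hρroot : (1 - a * ρ) ^ 2 * (1 - b * ρ ^ 2) = k * ρ ^ 3) {w : ℂ}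
    (hw : ‖w‖ = ρ) (hwroot : (1 - a * w) ^ 2 * (1 - b * w ^ 2) = k * w ^ 3) : w = ρ := by
  subst hw
  have hnorm : ‖1 - a * w‖ ^ 2 * ‖1 - b * w ^ 2‖ = (1 - a * ‖w‖) ^ 2 * (1 - b * ‖w‖ ^ 2) := by
    calc ‖1 - a * w‖ ^ 2 * ‖1 - b * w ^ 2‖ = ‖(k : ℂ) * w ^ 3‖ := by
          rw [← hwroot, norm_mul, norm_pow]
      _ = |k * ‖w‖ ^ 3| := by
          rw [norm_mul, norm_pow, Complex.norm_real, Real.norm_eq_abs, abs_mul, abs_pow, abs_norm]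
      _ = _ := by rw [← hρroot, abs_of_nonneg (mul_nonneg (sq_nonneg _) (by linarith))]
  have hb_le : 1 - b * ‖w‖ ^ 2 ≤ ‖1 - b * w ^ 2‖ := by
    rw [← norm_pow]
    exact Complex.one_sub_mul_norm_le hb (w ^ 2)
  exact Complex.eq_norm_of_norm_one_sub_mul_eq ha <| eq_of_sq_mul_eq_of_le (by linarith)
    (by linarith) (Complex.one_sub_mul_norm_le ha.le w) hb_le hnorm

open Complex in
theorem unique_root_on_circle_general
    (p1 p2 p3 q1 q2 q3 ρ0 : ℝ)
    (hp1 : p1 ∈ Set.Ioo (0:ℝ) 1) (hp2 : p2 ∈ Set.Ioo (0:ℝ) 1) (hp3 : p3 ∈ Set.Ioo (0:ℝ) 1)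
    (hq2 : q2 = 1 - p2)
    (hρpos : 0 < ρ0) (hρ1 : ρ0 < 1/(p1*q2)) (hρ2 : ρ0 < 1 / Real.sqrt p3)
    (hroot : (1 - p1*q2*ρ0)^2 * (1 - p3*ρ0^2) - 4*p2*q1*q2*q3*ρ0^3 = 0) :
    ∀ w : ℂ, ‖w‖ = ρ0 →
      (1 - (p1:ℂ)*(q2:ℂ)*w)^2 * (1 - (p3:ℂ)*w^2) - 4*(p2:ℂ)*(q1:ℂ)*(q2:ℂ)*(q3:ℂ)*w^3 = 0 →
      w = (ρ0 : ℂ) := by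
  intro w hw hwroot
  have ha : 0 < p1 * q2 := mul_pos hp1.1 (by linarith [hp2.2])
  refine eq_ofReal_of_norm_eq_of_root (k := 4 * p2 * q1 * q2 * q3) ha hp3.1.le
    ((lt_div_iff₀' ha).1 hρ1) (mul_sq_lt_one_of_lt_one_div_sqrt hp3.1 hρpos.le hρ2)
    (by linear_combination hroot) hw ?_
  push_cast
  linear_combination hwroot

open Complex in
/-- `ρ0` is the unique complex root of `R` on the circle `|z| = ρ0`. -/
theorem unique_root_on_circle
    (p1 p2 p3 q1 q2 q3 ρ0 : ℝ)
    (hp1 : p1 ∈ Set.Ioo (0:ℝ) 1) (hp2 : p2 ∈ Set.Ioo (0:ℝ) 1) (hp3 : p3 ∈ Set.Ioo (0:ℝ) 1)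
    (hq1 : q1 = 1 - p1) (hq2 : q2 = 1 - p2) (hq3 : q3 = 1 - p3)
    (hρpos : 0 < ρ0) (hρ1 : ρ0 < 1/(p1*q2)) (hρ2 : ρ0 < 1 / Real.sqrt p3)
    (hroot : (1 - p1*q2*ρ0)^2 * (1 - p3*ρ0^2) - 4*p2*q1*q2*q3*ρ0^3 = 0) :
    ∀ w : ℂ, ‖w‖ = ρ0 →
      (1 - (p1:ℂ)*(q2:ℂ)*w)^2 * (1 - (p3:ℂ)*w^2) - 4*(p2:ℂ)*(q1:ℂ)*(q2:ℂ)*(q3:ℂ)*w^3 = 0 →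
      w = (ρ0 : ℂ) :=
  unique_root_on_circle_general p1 p2 p3 q1 q2 q3 ρ0 hp1 hp2 hp3 hq2 hρpos hρ1 hρ2 hroot
end

section
/- Let p1, p2, p3 ∈ (0,1), q_i = 1 - p_i. If S, L, F are formal power series satisfying S = p1*L*S + q1*L, L = p2*z^2*F + q2*z, and F = p3*z^2*F + q3*L*S, then S satisfies p2*q3*z^2*S^2 - (1 - p1*q2*z)*(1 - p3*z^2)*S + q1*q2*z*(1 - p3*z^2) = 0. -/
/- Writing `h1` as `S = (a S + b) L` and eliminating `F` from `h2`, `h3` gives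
`(1 - e) L = c f L S + d (1 - e)`; multiplying by `a S + b` turns every `L` into `S`. -/
theorem quadratic_of_grammar_system {R : Type*} [CommRing R] {a b c d e f S L F : R}
    (h1 : S = a * L * S + b * L) (h2 : L = c * F + d) (h3 : F = e * F + f * L * S) :
    c * f * S ^ 2 - (1 - a * d) * (1 - e) * S + b * d * (1 - e) = 0 := by
  linear_combination (c * f * S - (1 - e)) * h1 - (a * S + b) * (1 - e) * h2
    - (a * S + b) * c * h3

open PowerSeries in
theorem system_implies_quadratic_general
    (p1 p2 p3 q1 q2 q3 : ℝ)
    (S L F : PowerSeries ℝ)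
    (h1 : S = C p1 * L * S + C q1 * L)
    (h2 : L = C p2 * X^2 * F + C q2 * X)
    (h3 : F = C p3 * X^2 * F + C q3 * L * S) :
    C (p2*q3) * X^2 * S^2
      - (1 - C (p1*q2) * X) * (1 - C p3 * X^2) * S
      + C (q1*q2) * X * (1 - C p3 * X^2) = 0 := by
  have := quadratic_of_grammar_system h1 h2 h3
  simp only [map_mul]
  linear_combination this

open PowerSeries in
/-- if formal power series `S, L, F` satisfy the DSV system of the
Knudsen–Hein grammar, then `S` satisfies the quadratic equation. -/
theorem system_implies_quadratic
    (p1 p2 p3 q1 q2 q3 : ℝ)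
    (hp1 : p1 ∈ Set.Ioo (0:ℝ) 1) (hp2 : p2 ∈ Set.Ioo (0:ℝ) 1) (hp3 : p3 ∈ Set.Ioo (0:ℝ) 1)
    (hq1 : q1 = 1 - p1) (hq2 : q2 = 1 - p2) (hq3 : q3 = 1 - p3)
    (S L F : PowerSeries ℝ)
    (h1 : S = C p1 * L * S + C q1 * L)
    (h2 : L = C p2 * X^2 * F + C q2 * X)
    (h3 : F = C p3 * X^2 * F + C q3 * L * S) :
    C (p2*q3) * X^2 * S^2
      - (1 - C (p1*q2) * X) * (1 - C p3 * X^2) * S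
      + C (q1*q2) * X * (1 - C p3 * X^2) = 0 :=
  system_implies_quadratic_general p1 p2 p3 q1 q2 q3 S L F h1 h2 h3
end
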